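/- arXiv:2411.00438 — 5 statements merged into one kernel-verified Lean document; each statement's English description precedes it below -/
import Mathlib

section
/- If the second-best minimization LP has an optimal solution (ũ*, v*, t_o*) with t_o* ≤ 1 and t_o* > 0, then the o-th DMU is CCR-efficient: (ũ*/t_o*, v*) is feasible for the CCR LP with objective value 1, which is optimal. -/
open Matrix BigOperators

noncomputable section

variable {l m n : ℕ}

/-- the `i`-th column of a matrix, as a vector. -/
def col (X : Matrix (Fin l) (Fin n) ℝ) (i : Fin n) : Fin l → ℝ := fun j => X j i

/-- the matrix with the `o`-th column deleted (columns indexed by `{i // i ≠ o}`). -/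
def del (X : Matrix (Fin l) (Fin n) ℝ) (o : Fin n) :
    Matrix (Fin l) {i : Fin n // i ≠ o} ℝ := Matrix.of fun j i => X j i.1

/-- if the second-best LP has an optimal solution `(uts, vs, ts)` with
`0 < ts ≤ 1`, then DMU `o` is CCR-efficient: `(uts/ts, vs)` is feasible for the CCR LP
with objective value `1`, which is the optimal value of the CCR LP. -/
theorem stmt_1 (l m n : ℕ) (X : Matrix (Fin l) (Fin n) ℝ) (Y : Matrix (Fin m) (Fin n) ℝ)
    (o : Fin n) (hX : ∀ j i, 0 ≤ X j i) (hY : ∀ k i, 0 ≤ Y k i)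
    (uts : Fin l → ℝ) (vs : Fin m → ℝ) (ts : ℝ)
    (hfeas : 0 ≤ uts ∧ 0 ≤ vs ∧ _root_.col X o ⬝ᵥ uts = ts ∧ _root_.col Y o ⬝ᵥ vs = 1 ∧
      (del Y o)ᵀ.mulVec vs ≤ (del X o)ᵀ.mulVec uts)
    (hopt : IsLeast {t : ℝ | ∃ (ut : Fin l → ℝ) (v : Fin m → ℝ), 0 ≤ ut ∧ 0 ≤ v ∧
      _root_.col X o ⬝ᵥ ut = t ∧ _root_.col Y o ⬝ᵥ v = 1 ∧
      (del Y o)ᵀ.mulVec v ≤ (del X o)ᵀ.mulVec ut} ts)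
    (hle : ts ≤ 1) (hpos : 0 < ts) :
    (0 ≤ ts⁻¹ • uts ∧ 0 ≤ vs ∧ _root_.col X o ⬝ᵥ (ts⁻¹ • uts) = 1 ∧
      Yᵀ.mulVec vs ≤ Xᵀ.mulVec (ts⁻¹ • uts) ∧ _root_.col Y o ⬝ᵥ vs = 1) ∧
    IsGreatest {θ : ℝ | ∃ (u : Fin l → ℝ) (v : Fin m → ℝ), 0 ≤ u ∧ 0 ≤ v ∧
      _root_.col X o ⬝ᵥ u = 1 ∧ Yᵀ.mulVec v ≤ Xᵀ.mulVec u ∧ θ = _root_.col Y o ⬝ᵥ v} 1 := by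
  obtain ⟨hu, hv, hxu, hyv, hdel⟩ := hfeas
  have hts_inv_pos : 0 < ts⁻¹ := inv_pos.mpr hpos
  have hone_le : (1 : ℝ) ≤ ts⁻¹ := (one_le_inv₀ hpos).mpr hle
  have hun : 0 ≤ ts⁻¹ • uts := by
    intro j
    exact mul_nonneg hts_inv_pos.le (hu j)
  have hobj : _root_.col X o ⬝ᵥ (ts⁻¹ • uts) = 1 := by
    rw [dotProduct_smul, hxu, smul_eq_mul, inv_mul_cancel₀ hpos.ne']
  have hcons : Yᵀ.mulVec vs ≤ Xᵀ.mulVec (ts⁻¹ • uts) := by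
    intro i
    have hYi : (Yᵀ.mulVec vs) i = _root_.col Y i ⬝ᵥ vs := rfl
    have hXi : (Xᵀ.mulVec (ts⁻¹ • uts)) i = ts⁻¹ * (_root_.col X i ⬝ᵥ uts) := by
      simp only [Matrix.mulVec, dotProduct, Matrix.transpose_apply, Pi.smul_apply,
        smul_eq_mul, Finset.mul_sum, _root_.col]
      exact Finset.sum_congr rfl fun j _ => by ring
    rw [hYi, hXi]
    by_cases hio : i = o
    · subst hio
      rw [hyv, hxu, inv_mul_cancel₀ hpos.ne']
    · have h1 : _root_.col Y i ⬝ᵥ vs ≤ _root_.col X i ⬝ᵥ uts := hdel ⟨i, hio⟩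
      have h2 : 0 ≤ _root_.col X i ⬝ᵥ uts :=
        Finset.sum_nonneg fun j _ => mul_nonneg (hX j i) (hu j)
      calc _root_.col Y i ⬝ᵥ vs ≤ _root_.col X i ⬝ᵥ uts := h1
        _ = 1 * (_root_.col X i ⬝ᵥ uts) := (one_mul _).symm
        _ ≤ ts⁻¹ * (_root_.col X i ⬝ᵥ uts) := mul_le_mul_of_nonneg_right hone_le h2
  refine ⟨⟨hun, hv, hobj, hcons, hyv⟩, ⟨⟨ts⁻¹ • uts, vs, hun, hv, hobj, hcons, hyv.symm⟩, ?_⟩⟩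
  rintro θ ⟨u, v, hu', hv', hxu', hc', rfl⟩
  have := hc' o
  have hYo : (Yᵀ.mulVec v) o = _root_.col Y o ⬝ᵥ v := rfl
  have hXo : (Xᵀ.mulVec u) o = _root_.col X o ⬝ᵥ u := rfl
  rw [hYo, hXo, hxu'] at this
  exact this
end
end

section
/- (R0, first part) The o-th DMU is CCR-efficient (optimal value of the output-oriented CCR envelopment model (C) equals 1) if and only if the optimal value of the super-efficiency model (S) is at most 1. Consequently, the optimal value of (C) exceeds 1 if and only if the optimal value of (S) exceeds 1. -/
open Matrix BigOperators

noncomputable section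

variable {l m n : ℕ}

/-- feasible values of the output-oriented CCR envelopment model (C). -/
def Cset (X : Matrix (Fin l) (Fin n) ℝ) (Y : Matrix (Fin m) (Fin n) ℝ) (o : Fin n) : Set ℝ :=
  {η | ∃ lam : Fin n → ℝ, 0 ≤ lam ∧ X.mulVec lam ≤ _root_.col X o ∧ η • _root_.col Y o ≤ Y.mulVec lam}

/-- feasible values of the super-efficiency model (S). -/
def Sset (X : Matrix (Fin l) (Fin n) ℝ) (Y : Matrix (Fin m) (Fin n) ℝ) (o : Fin n) : Set ℝ :=
  {η | ∃ lam : {i : Fin n // i ≠ o} → ℝ, 0 ≤ lam ∧ (del X o).mulVec lam ≤ _root_.col X o ∧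
        η • _root_.col Y o ≤ (del Y o).mulVec lam}

lemma aux_sum (o : Fin n) (f : Fin n → ℝ) :
    ∑ i : {i : Fin n // i ≠ o}, f i.1 = ∑ i, f i - f o := by
  rw [← Finset.sum_subtype (Finset.univ.filter (· ≠ o)) (by simp) f,
    Finset.filter_ne' Finset.univ o, Finset.sum_erase_eq_sub (Finset.mem_univ o)]

lemma one_mem_C (X : Matrix (Fin l) (Fin n) ℝ) (Y : Matrix (Fin m) (Fin n) ℝ) (o : Fin n) :
    (1 : ℝ) ∈ Cset X Y o := by
  refine ⟨fun i => if i = o then 1 else 0, ?_, ?_, ?_⟩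
  · intro i; dsimp; split_ifs <;> norm_num
  · intro j
    simp [mulVec, dotProduct, mul_ite, mul_one, mul_zero, Finset.sum_ite_eq', _root_.col]
  · intro k
    simp [mulVec, dotProduct, mul_ite, mul_one, mul_zero, Finset.sum_ite_eq', _root_.col]

lemma S_subset_C (X : Matrix (Fin l) (Fin n) ℝ) (Y : Matrix (Fin m) (Fin n) ℝ) (o : Fin n) :
    Sset X Y o ⊆ Cset X Y o := by
  rintro η ⟨lam, h0, hx, hy⟩
  refine ⟨fun i => if h : i = o then 0 else lam ⟨i, h⟩, ?_, ?_, ?_⟩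
  · intro i; dsimp; split_ifs with h
    · exact le_refl 0
    · exact h0 ⟨i, h⟩
  · intro j
    have e : X.mulVec (fun i => if h : i = o then 0 else lam ⟨i, h⟩) j
        = (del X o).mulVec lam j := by
      simp only [mulVec, dotProduct, del, of_apply]
      have := aux_sum o (fun i => X j i * if h : i = o then 0 else lam ⟨i, h⟩)
      simp only [dif_pos rfl, dite_true, mul_zero, sub_zero] at this
      rw [← this]
      exact Finset.sum_congr rfl fun i _ => by rw [dif_neg i.2]
    rw [e]; exact hx j
  · intro k
    have e : Y.mulVec (fun i => if h : i = o then 0 else lam ⟨i, h⟩) k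
        = (del Y o).mulVec lam k := by
      simp only [mulVec, dotProduct, del, of_apply]
      have := aux_sum o (fun i => Y k i * if h : i = o then 0 else lam ⟨i, h⟩)
      simp only [dif_pos rfl, dite_true, mul_zero, sub_zero] at this
      rw [← this]
      exact Finset.sum_congr rfl fun i _ => by rw [dif_neg i.2]
    rw [e]; exact hy k

lemma key (X : Matrix (Fin l) (Fin n) ℝ) (Y : Matrix (Fin m) (Fin n) ℝ) (o : Fin n)
    (hX : ∀ j i, 0 ≤ X j i) (hY : ∀ k i, 0 ≤ Y k i) (ηC : ℝ)
    (hC : IsGreatest (Cset X Y o) ηC) (h1 : 1 < ηC) :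
    ∃ η' ∈ Sset X Y o, 1 < η' := by
  obtain ⟨lam, h0, hx, hy⟩ := hC.1
  set t := lam o with ht_def
  by_cases ht : t < 1
  · have h1t : 0 < 1 - t := by linarith
    refine ⟨(ηC - t) / (1 - t), ⟨fun i => lam i.1 / (1 - t), ?_, ?_, ?_⟩, ?_⟩
    · intro i; exact div_nonneg (h0 i.1) h1t.le
    · intro j
      have e : (del X o).mulVec (fun i => lam i.1 / (1 - t)) j
          = ((∑ i, X j i * lam i) - X j o * t) / (1 - t) := by
        simp only [mulVec, dotProduct, del, of_apply]
        rw [← aux_sum o (fun i => X j i * lam i), Finset.sum_div]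
        exact Finset.sum_congr rfl fun i _ => by rw [mul_div_assoc]
      rw [e]
      have hxj : ∑ i, X j i * lam i ≤ X j o := hx j
      show _ ≤ X j o
      rw [div_le_iff₀ h1t]
      nlinarith [hxj]
    · intro k
      have e : (del Y o).mulVec (fun i => lam i.1 / (1 - t)) k
          = ((∑ i, Y k i * lam i) - Y k o * t) / (1 - t) := by
        simp only [mulVec, dotProduct, del, of_apply]
        rw [← aux_sum o (fun i => Y k i * lam i), Finset.sum_div]
        exact Finset.sum_congr rfl fun i _ => by rw [mul_div_assoc]
      have hyk : ηC * Y k o ≤ ∑ i, Y k i * lam i := hy k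
      show (ηC - t) / (1 - t) * Y k o ≤ _
      rw [e, div_mul_eq_mul_div]
      gcongr
      linarith
    · rw [lt_div_iff₀ h1t]; linarith
  · exfalso
    push_neg at ht
    have hmem : (2 * ηC - 1) ∈ Cset X Y o := by
      refine ⟨fun i => 2 * lam i - (if i = o then 1 else 0), ?_, ?_, ?_⟩
      · intro i; dsimp; split_ifs with h
        · subst h; linarith
        · have := h0 i; dsimp at this; linarith
      · intro j
        have e : X.mulVec (fun i => 2 * lam i - (if i = o then 1 else 0)) j
            = 2 * (∑ i, X j i * lam i) - X j o := by
          simp only [mulVec, dotProduct, mul_sub, mul_ite, mul_one, mul_zero,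
            Finset.sum_sub_distrib, Finset.sum_ite_eq', Finset.mem_univ, if_true]
          congr 1
          rw [Finset.mul_sum]
          exact Finset.sum_congr rfl fun i _ => by ring
        have hxj : ∑ i, X j i * lam i ≤ X j o := hx j
        rw [e]; show _ ≤ X j o; linarith
      · intro k
        have e : Y.mulVec (fun i => 2 * lam i - (if i = o then 1 else 0)) k
            = 2 * (∑ i, Y k i * lam i) - Y k o := by
          simp only [mulVec, dotProduct, mul_sub, mul_ite, mul_one, mul_zero,
            Finset.sum_sub_distrib, Finset.sum_ite_eq', Finset.mem_univ, if_true]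
          congr 1
          rw [Finset.mul_sum]
          exact Finset.sum_congr rfl fun i _ => by ring
        have hyk : ηC * Y k o ≤ ∑ i, Y k i * lam i := hy k
        rw [e]; show (2 * ηC - 1) * Y k o ≤ _
        have := hY k o
        nlinarith
    have := hC.2 hmem
    linarith

/-- R0, first part: with nonnegative data and both optima attained, DMU `o`
is CCR-efficient (optimal value of (C) equals 1) iff the optimal value of (S) is at
most 1; consequently the optimal value of (C) exceeds 1 iff that of (S) does. -/
theorem stmt_6 (l m n : ℕ) (X : Matrix (Fin l) (Fin n) ℝ) (Y : Matrix (Fin m) (Fin n) ℝ)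
    (o : Fin n) (hX : ∀ j i, 0 ≤ X j i) (hY : ∀ k i, 0 ≤ Y k i)
    (ηC ηS : ℝ) (hC : IsGreatest (Cset X Y o) ηC) (hS : IsGreatest (Sset X Y o) ηS) :
    (ηC = 1 ↔ ηS ≤ 1) ∧ (1 < ηC ↔ 1 < ηS) := by
  have hC1 : 1 ≤ ηC := hC.2 (one_mem_C X Y o)
  have hSC : ηS ≤ ηC := hC.2 (S_subset_C X Y o hS.1)
  have forward : 1 < ηC → 1 < ηS := by
    intro h
    obtain ⟨η', hmem, hη⟩ := key X Y o hX hY ηC hC h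
    exact lt_of_lt_of_le hη (hS.2 hmem)
  have back : 1 < ηS → 1 < ηC := fun h => lt_of_lt_of_le h hSC
  refine ⟨⟨?_, ?_⟩, forward, back⟩
  · intro h
    by_contra hlt
    push_neg at hlt
    have := back hlt
    linarith
  · intro h
    have : ¬ 1 < ηC := fun hh => absurd (forward hh) (not_lt.mpr h)
    linarith
end
end

section
/- (R1) Suppose the optimal value of the CCR slack-maximization problem (CSM) with η* = 1 is zero and (CSM) has the unique optimal solution λ = e_o (with slacks zero). Then it cannot happen that the optimal value of (S) equals 1 and the optimal value of (SSM) with η̃* = 1 is positive. -/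
open Matrix BigOperators

noncomputable section

variable {l m n : ℕ}

/-- total slack objective. -/
def slackObj (e1 : Fin l → ℝ) (e2 : Fin m → ℝ) : ℝ := (∑ j, e1 j) + (∑ k, e2 k)

/-- feasibility for the CCR slack-maximization problem (CSM) with parameter `ηs`. -/
def CSMfeas (X : Matrix (Fin l) (Fin n) ℝ) (Y : Matrix (Fin m) (Fin n) ℝ) (o : Fin n)
    (ηs : ℝ) (lam : Fin n → ℝ) (e1 : Fin l → ℝ) (e2 : Fin m → ℝ) : Prop :=
  0 ≤ lam ∧ 0 ≤ e1 ∧ 0 ≤ e2 ∧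
    _root_.col X o - e1 = X.mulVec lam ∧ ηs • _root_.col Y o + e2 = Y.mulVec lam

/-- attainable objective values of (CSM). -/
def CSMset (X : Matrix (Fin l) (Fin n) ℝ) (Y : Matrix (Fin m) (Fin n) ℝ) (o : Fin n)
    (ηs : ℝ) : Set ℝ :=
  {s | ∃ lam e1 e2, CSMfeas X Y o ηs lam e1 e2 ∧ s = slackObj e1 e2}

/-- feasibility for the super-efficiency slack-maximization problem (SSM) with
parameter `ηts`. -/
def SSMfeas (X : Matrix (Fin l) (Fin n) ℝ) (Y : Matrix (Fin m) (Fin n) ℝ) (o : Fin n)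
    (ηts : ℝ) (lam : {i : Fin n // i ≠ o} → ℝ) (e1 : Fin l → ℝ) (e2 : Fin m → ℝ) : Prop :=
  0 ≤ lam ∧ 0 ≤ e1 ∧ 0 ≤ e2 ∧
    _root_.col X o - e1 = (del X o).mulVec lam ∧ ηts • _root_.col Y o + e2 = (del Y o).mulVec lam

/-- attainable objective values of (SSM). -/
def SSMset (X : Matrix (Fin l) (Fin n) ℝ) (Y : Matrix (Fin m) (Fin n) ℝ) (o : Fin n)
    (ηts : ℝ) : Set ℝ :=
  {s | ∃ lam e1 e2, SSMfeas X Y o ηts lam e1 e2 ∧ s = slackObj e1 e2}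

lemma extend_mulVec {p n : ℕ} (A : Matrix (Fin p) (Fin n) ℝ) (o : Fin n)
    (lam : {i : Fin n // i ≠ o} → ℝ) :
    A.mulVec (fun i => if h : i = o then 0 else lam ⟨i, h⟩) = (del A o).mulVec lam := by
  funext j
  simp only [Matrix.mulVec, dotProduct, del, Matrix.of_apply]
  rw [← Finset.add_sum_erase _ _ (Finset.mem_univ o)]
  rw [Finset.sum_subtype (p := fun i => i ≠ o) (Finset.univ.erase o)
    (fun i => by simp [Finset.mem_erase]) (fun i => A j i * (if h : i = o then 0 else lam ⟨i, h⟩))]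
  rw [dif_pos rfl, mul_zero, zero_add]
  exact Finset.sum_congr rfl fun x _ => by rw [dif_neg x.2]

/-- R1: if (CSM) with `η* = 1` has optimal value 0 with unique optimal
solution `λ = eₒ` (and zero slacks), then it cannot happen that the optimal value of
(S) equals 1 while the optimal value of (SSM) with `η̃* = 1` is positive. -/
theorem stmt_8 (l m n : ℕ) (X : Matrix (Fin l) (Fin n) ℝ) (Y : Matrix (Fin m) (Fin n) ℝ)
    (o : Fin n)
    (hopt : IsGreatest (CSMset X Y o 1) 0)
    (huniq : ∀ lam e1 e2, CSMfeas X Y o 1 lam e1 e2 → slackObj e1 e2 = 0 →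
      lam = Pi.single o 1 ∧ e1 = 0 ∧ e2 = 0) :
    ¬ (IsGreatest (Sset X Y o) 1 ∧ ∃ s, 0 < s ∧ IsGreatest (SSMset X Y o 1) s) := by
  rintro ⟨hS, s, hs_pos, hssm⟩
  obtain ⟨lam, e1, e2, ⟨hl, he1, he2, hx, hy⟩, hval⟩ := hssm.1
  have hfeas : CSMfeas X Y o 1 (fun i => if h : i = o then 0 else lam ⟨i, h⟩) e1 e2 := by
    refine ⟨fun i => ?_, he1, he2, ?_, ?_⟩
    · dsimp only; split
      · exact le_refl _
      · exact hl _
    · rw [extend_mulVec]; exact hx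
    · rw [extend_mulVec]; exact hy
  have : s ∈ CSMset X Y o 1 := ⟨_, e1, e2, hfeas, hval⟩
  exact absurd (hopt.2 this) (not_le.mpr hs_pos)
end
end

section
/- (R2) Suppose the optimal value of (CSM) with η* = 1 is zero and (CSM) has the unique optimal solution λ = e_o. Then it cannot happen that the optimal value of (S) equals 1 and the optimal value of (SSM) with η̃* = 1 equals zero: any feasible solution of (SSM) with zero objective would yield a second optimal solution of (CSM) distinct from e_o, a contradiction. -/
open Matrix BigOperators

noncomputable section

variable {l m n : ℕ}

/-- R2: if (CSM) with `η* = 1` has optimal value 0 with unique optimal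
solution `λ = eₒ` (and zero slacks), then it cannot happen that the optimal value of
(S) equals 1 while the optimal value of (SSM) with `η̃* = 1` equals 0. -/
theorem stmt_9 (l m n : ℕ) (X : Matrix (Fin l) (Fin n) ℝ) (Y : Matrix (Fin m) (Fin n) ℝ)
    (o : Fin n)
    (hopt : IsGreatest (CSMset X Y o 1) 0)
    (huniq : ∀ lam e1 e2, CSMfeas X Y o 1 lam e1 e2 → slackObj e1 e2 = 0 →
      lam = Pi.single o 1 ∧ e1 = 0 ∧ e2 = 0) :
    ¬ (IsGreatest (Sset X Y o) 1 ∧ IsGreatest (SSMset X Y o 1) 0) := by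
  rintro ⟨-, ⟨lam, e1, e2, ⟨hl, h1, h2, hx, hy⟩, hs⟩, -⟩
  set lam' : Fin n → ℝ := fun i => if h : i = o then 0 else lam ⟨i, h⟩ with hlam'
  have hext : ∀ (k : ℕ) (M : Matrix (Fin k) (Fin n) ℝ),
      M.mulVec lam' = (del M o).mulVec lam := by
    intro k M
    funext j
    simp only [Matrix.mulVec, dotProduct]
    rw [← Finset.sum_erase Finset.univ (a := o) (by simp [lam'])]
    rw [Finset.sum_subtype (p := fun i => i ≠ o) (Finset.univ.erase o)
      (fun i => by simp [Finset.mem_erase]) (fun i => M j i * lam' i)]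
    refine Finset.sum_congr rfl fun i _ => ?_
    simp [lam', i.2, del]
  have hfeas : CSMfeas X Y o 1 lam' e1 e2 := by
    refine ⟨?_, h1, h2, by rw [hext]; exact hx, by rw [hext]; exact hy⟩
    intro i
    by_cases h : i = o
    · simp [lam', h]
    · simpa [lam', h] using hl ⟨i, h⟩
  have := (huniq lam' e1 e2 hfeas hs.symm).1
  have h0 : lam' o = 0 := by simp [lam']
  rw [this] at h0
  simp at h0
end
end

section
/- If the optimal value of the super-efficiency model (S) is η̃* > 0 and (η̃*, λ*) is optimal, then for every feasible (ũ, v, t) of the second-best primal LP, t ≥ η̃*; moreover if strong LP duality holds (both problems feasible and bounded), the optimal value t_o* of the second-best LP equals η̃*. Hence minimizing the maximal efficiency score of the DMUs other than o over weights certifying efficiency of DMU o is achieved exactly by the super-efficiency score. -/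
open Matrix BigOperators

noncomputable section

variable {l m n : ℕ}

set_option linter.unusedSectionVars false

section FarkasAux

variable {E : Type*} [NormedAddCommGroup E] [InnerProductSpace ℝ E] [FiniteDimensional ℝ E]
variable {ι : Type*} [Fintype ι]

def coneSet (g : ι → E) : Set E := {x | ∃ c : ι → ℝ, (∀ i, 0 ≤ c i) ∧ ∑ i, c i • g i = x}

lemma sum_restrict (g : ι → E) (p : ι → Prop) [DecidablePred p] (q : ι → ℝ)
    (hq : ∀ i, ¬ p i → q i = 0) :
    ∑ i, q i • g i = ∑ i : {i // p i}, q i.1 • g i.1 := by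
  classical
  rw [← Finset.sum_subtype (Finset.univ.filter p) (fun x => by simp) (fun i => q i • g i)]
  exact (Finset.sum_filter_of_ne (fun x _ hx => by
    by_contra h
    exact hx (by simp [hq x h]))).symm

lemma carath (g : ι → E) (c : ι → ℝ) (hc : ∀ i, 0 ≤ c i) :
    ∃ c' : ι → ℝ, (∀ i, 0 ≤ c' i) ∧ (∑ i, c' i • g i = ∑ i, c i • g i) ∧
      LinearIndependent ℝ (fun i : {i // c' i ≠ 0} => g i.1) := by
  classical
  generalize hN : (Finset.univ.filter (fun i => c i ≠ 0)).card = N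
  induction N using Nat.strong_induction_on generalizing c with
  | _ N IH =>
  by_cases hli : LinearIndependent ℝ (fun i : {i // c i ≠ 0} => g i.1)
  · exact ⟨c, hc, rfl, hli⟩
  obtain ⟨f, hf0, j0, hj0⟩ := Fintype.not_linearIndependent_iff.mp hli
  set d : ι → ℝ := fun i => if h : c i ≠ 0 then f ⟨i, h⟩ else 0 with hd
  have hdz : ∀ i, c i = 0 → d i = 0 := fun i hi => by simp [hd, hi]
  have hdsum : ∑ i, d i • g i = 0 := by
    rw [sum_restrict g (fun i => c i ≠ 0) d (fun i hi => hdz i (not_not.mp hi))]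
    rw [← hf0]
    exact Finset.sum_congr rfl (fun i _ => by simp [hd, i.2])
  have hdj0 : d j0.1 ≠ 0 := by simpa [hd, j0.2] using hj0
  -- pick e = ±d with a positive entry
  obtain ⟨e, hez, hesum, hepos⟩ :
      ∃ e : ι → ℝ, (∀ i, c i = 0 → e i = 0) ∧ (∑ i, e i • g i = 0) ∧ ∃ i, 0 < e i := by
    rcases lt_or_gt_of_ne hdj0 with h | h
    · exact ⟨-d, fun i hi => by simp [hdz i hi], by simp [hdsum], ⟨j0.1, by simpa using h⟩⟩
    · exact ⟨d, hdz, hdsum, ⟨j0.1, h⟩⟩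
  obtain ⟨i0, hi0S, hmin⟩ := Finset.exists_min_image (Finset.univ.filter (fun i => 0 < e i))
    (fun i => c i / e i) ⟨hepos.choose, by simpa using hepos.choose_spec⟩
  have hei0 : 0 < e i0 := by simpa using hi0S
  set t : ℝ := c i0 / e i0 with htdef
  have ht0 : 0 ≤ t := div_nonneg (hc i0) hei0.le
  set c' : ι → ℝ := fun i => c i - t * e i with hc'def
  have hc' : ∀ i, 0 ≤ c' i := by
    intro i
    by_cases h : 0 < e i
    · have := hmin i (by simpa using h)
      have := (le_div_iff₀ h).mp this
      simp only [hc'def]; linarith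
    · push_neg at h
      have : t * e i ≤ 0 := mul_nonpos_of_nonneg_of_nonpos ht0 h
      simp only [hc'def]; linarith [hc i]
  have hsum' : ∑ i, c' i • g i = ∑ i, c i • g i := by
    simp only [hc'def, sub_smul, Finset.sum_sub_distrib]
    have : ∑ x : ι, (t * e x) • g x = t • ∑ x : ι, e x • g x := by
      rw [Finset.smul_sum]
      exact Finset.sum_congr rfl (fun i _ => (smul_smul t (e i) (g i)).symm)
    rw [this, hesum, smul_zero, sub_zero]
  have hsubset : Finset.univ.filter (fun i => c' i ≠ 0) ⊂ Finset.univ.filter (fun i => c i ≠ 0) := by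
    constructor
    · intro i hi
      simp only [Finset.mem_filter, Finset.mem_univ, true_and] at hi ⊢
      intro hci
      exact hi (by simp [hc'def, hci, hez i hci])
    · intro hsub
      have hci0 : c i0 ≠ 0 := by
        intro h; rw [hez i0 h] at hei0; exact lt_irrefl 0 hei0
      have := hsub (by simp [hci0] : i0 ∈ Finset.univ.filter (fun i => c i ≠ 0))
      simp only [Finset.mem_filter, Finset.mem_univ, true_and] at this
      exact this (by simp only [hc'def, htdef, div_mul_cancel₀ _ hei0.ne', sub_self])
  have hcard : (Finset.univ.filter (fun i => c' i ≠ 0)).card < N := by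
    rw [← hN]; exact Finset.card_lt_card hsubset
  obtain ⟨c'', h1, h2, h3⟩ := IH _ hcard c' hc' rfl
  exact ⟨c'', h1, h2.trans hsum', h3⟩

lemma coneSet_isClosed (g : ι → E) : IsClosed (coneSet g) := by
  classical
  have hK : ∀ s : Finset ι, LinearIndependent ℝ (fun i : s => g i.1) →
      IsClosed ((fun c : s → ℝ => ∑ i : s, c i • g i.1) '' {c | ∀ i, 0 ≤ c i}) := by
    intro s hli
    let L : (s → ℝ) →ₗ[ℝ] E :=
      { toFun := fun c => ∑ i : s, c i • g i.1
        map_add' := fun a b => by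
          simp only [Pi.add_apply, add_smul]
          exact Finset.sum_add_distrib
        map_smul' := fun r a => by
          simp only [Pi.smul_apply, smul_eq_mul, RingHom.id_apply, Finset.smul_sum]
          exact Finset.sum_congr rfl fun i _ => (smul_smul r (a i) (g i.1)).symm }
    have hker : LinearMap.ker L = ⊥ := by
      rw [LinearMap.ker_eq_bot']
      intro c hcL
      funext i
      exact Fintype.linearIndependent_iff.mp hli c hcL i
    have hemb := LinearMap.isClosedEmbedding_of_injective hker
    have hcl : IsClosed {c : s → ℝ | ∀ i, 0 ≤ c i} := by
      have : {c : s → ℝ | ∀ i, 0 ≤ c i} = ⋂ i, (fun c : s → ℝ => c i) ⁻¹' Set.Ici 0 := by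
        ext; simp [Set.mem_iInter]
      rw [this]
      exact isClosed_iInter fun i => isClosed_Ici.preimage (continuous_apply i)
    exact hemb.isClosedMap _ hcl
  have hrepr : coneSet g = ⋃ (s : Finset ι) (_ : LinearIndependent ℝ (fun i : s => g i.1)),
      ((fun c : s → ℝ => ∑ i : s, c i • g i.1) '' {c | ∀ i, 0 ≤ c i}) := by
    ext x
    simp only [Set.mem_iUnion]
    constructor
    · rintro ⟨c, hc0, rfl⟩
      obtain ⟨c', h0, hsum, hli⟩ := carath g c hc0
      set s : Finset ι := Finset.univ.filter (fun i => c' i ≠ 0) with hs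
      have hmem : ∀ i : ι, i ∈ s ↔ c' i ≠ 0 := fun i => by simp [hs]
      have hli' : LinearIndependent ℝ (fun i : s => g i.1) :=
        (linearIndependent_equiv (Equiv.subtypeEquivRight hmem)).mpr hli
      refine ⟨s, hli', ⟨fun i => c' i.1, fun i => h0 i.1, ?_⟩⟩
      rw [← hsum]
      show (∑ i ∈ (Finset.univ : Finset {x // x ∈ s}), c' i.1 • g i.1) = _
      rw [Finset.univ_eq_attach, Finset.sum_attach s (fun i => c' i • g i)]
      exact (Finset.sum_subset (f := fun i => c' i • g i) (Finset.subset_univ s)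
        (fun i _ hi => by
          have : c' i = 0 := by
            by_contra h
            exact hi ((hmem i).mpr h)
          show c' i • g i = 0
          rw [this, zero_smul]))
    · rintro ⟨s, hli, c, hc0, rfl⟩
      refine ⟨fun i => if h : i ∈ s then c ⟨i, h⟩ else 0, fun i => ?_, ?_⟩
      · by_cases h : i ∈ s
        · simpa [h] using hc0 ⟨i, h⟩
        · simp [h]
      · rw [← Finset.sum_subset (Finset.subset_univ s) (fun i _ hi => by simp [hi])]
        show _ = (∑ i ∈ (Finset.univ : Finset {x // x ∈ s}), c i • g i.1)
        rw [Finset.univ_eq_attach,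
          ← Finset.sum_attach s (fun i => (if h : i ∈ s then c ⟨i, h⟩ else 0) • g i)]
        exact Finset.sum_congr rfl fun i _ => by simp [i.2]
  rw [hrepr]
  exact isClosed_iUnion_of_finite fun s => isClosed_iUnion_of_finite fun hli => hK s hli

lemma farkas (g : ι → E) (b : E) (hb : b ∉ coneSet g) :
    ∃ y : E, (∀ i, (0:ℝ) ≤ inner ℝ (g i) y) ∧ (inner ℝ y b : ℝ) < 0 := by
  classical
  let K : ConvexCone ℝ E :=
    { carrier := coneSet g
      smul_mem' := by
        rintro a ha x ⟨c, hc0, rfl⟩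
        refine ⟨fun i => a * c i, fun i => mul_nonneg ha.le (hc0 i), ?_⟩
        rw [Finset.smul_sum]
        exact Finset.sum_congr rfl fun i _ => (smul_smul a (c i) (g i)).symm
      add_mem' := by
        rintro x ⟨c, hc0, rfl⟩ y ⟨c', hc0', rfl⟩
        refine ⟨fun i => c i + c' i, fun i => add_nonneg (hc0 i) (hc0' i), ?_⟩
        rw [← Finset.sum_add_distrib]
        exact Finset.sum_congr rfl fun i _ => (add_smul (c i) (c' i) (g i)) }
  have hne : (K : Set E).Nonempty := ⟨0, ⟨0, fun i => le_refl 0, by simp⟩⟩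
  have hcl : IsClosed (K : Set E) := coneSet_isClosed g
  let C : ProperCone ℝ E :=
    { carrier := coneSet g
      add_mem' := fun hx hy => K.add_mem' hx hy
      zero_mem' := ⟨0, fun i => le_refl 0, by simp⟩
      smul_mem' := by
        rintro a x ⟨c, hc0, rfl⟩
        refine ⟨fun i => (a : ℝ) * c i, fun i => mul_nonneg a.2 (hc0 i), ?_⟩
        show ∑ i, ((a : ℝ) * c i) • g i = (a : ℝ) • ∑ i, c i • g i
        rw [Finset.smul_sum]
        exact Finset.sum_congr rfl fun i _ => (smul_smul (a : ℝ) (c i) (g i)).symm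
      isClosed' := hcl }
  obtain ⟨y, hy1, hy2⟩ := ProperCone.hyperplane_separation' C (show b ∉ C from hb)
  refine ⟨y, fun i => ?_, by rw [real_inner_comm]; exact hy2⟩
  refine hy1 (g i) ⟨fun j => if j = i then 1 else 0, fun j => by positivity, ?_⟩
  simp [ite_smul]

end FarkasAux

lemma dot_le_right {α : Type*} [Fintype α] {a b v : α → ℝ} (h : a ≤ b) (hv : 0 ≤ v) :
    a ⬝ᵥ v ≤ b ⬝ᵥ v :=
  Finset.sum_le_sum fun i _ => mul_le_mul_of_nonneg_right (h i) (hv i)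

lemma dot_le_left {α : Type*} [Fintype α] {a v w : α → ℝ} (h : v ≤ w) (ha : 0 ≤ a) :
    a ⬝ᵥ v ≤ a ⬝ᵥ w :=
  Finset.sum_le_sum fun i _ => mul_le_mul_of_nonneg_left (h i) (ha i)

lemma mulVec_dot {α β : Type*} [Fintype α] [Fintype β] (A : Matrix α β ℝ) (x : β → ℝ)
    (y : α → ℝ) : A.mulVec x ⬝ᵥ y = x ⬝ᵥ Aᵀ.mulVec y := by
  rw [Matrix.mulVec_transpose, dotProduct_comm x, ← dotProduct_mulVec,
    dotProduct_comm]

lemma chain_ineq {X : Matrix (Fin l) (Fin n) ℝ} {Y : Matrix (Fin m) (Fin n) ℝ}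
    {o : Fin n} {η : ℝ} (hfeas : η ∈ Sset X Y o) {u : Fin l → ℝ} {w : Fin m → ℝ}
    (hu : 0 ≤ u) (hw : 0 ≤ w) (hd : (del Y o)ᵀ.mulVec w ≤ (del X o)ᵀ.mulVec u) :
    η * (_root_.col Y o ⬝ᵥ w) ≤ _root_.col X o ⬝ᵥ u := by
  obtain ⟨lam, hlam0, hXlam, hYlam⟩ := hfeas
  have h1 : (η • _root_.col Y o) ⬝ᵥ w ≤ (del Y o).mulVec lam ⬝ᵥ w := dot_le_right hYlam hw
  have h2 : (del Y o).mulVec lam ⬝ᵥ w = lam ⬝ᵥ (del Y o)ᵀ.mulVec w := mulVec_dot _ _ _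
  have h3 : lam ⬝ᵥ (del Y o)ᵀ.mulVec w ≤ lam ⬝ᵥ (del X o)ᵀ.mulVec u := dot_le_left hd hlam0
  have h4 : lam ⬝ᵥ (del X o)ᵀ.mulVec u = (del X o).mulVec lam ⬝ᵥ u := (mulVec_dot _ _ _).symm
  have h5 : (del X o).mulVec lam ⬝ᵥ u ≤ _root_.col X o ⬝ᵥ u := dot_le_right hXlam hu
  have h0 : (η • _root_.col Y o) ⬝ᵥ w = η * (_root_.col Y o ⬝ᵥ w) := smul_dotProduct η _ _
  linarith

/-- if the super-efficiency model (S) has attained optimal value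
`ηs > 0`, then every feasible `(ut, v, t)` of the second-best primal LP satisfies
`ηs ≤ t`; moreover the attained optimal value of the second-best LP (strong LP
duality) equals `ηs`: minimizing the second-best efficiency score is achieved exactly
by the super-efficiency score. -/
theorem stmt_15 (l m n : ℕ) (X : Matrix (Fin l) (Fin n) ℝ) (Y : Matrix (Fin m) (Fin n) ℝ)
    (o : Fin n) (ηs : ℝ) (hS : IsGreatest (Sset X Y o) ηs) (hpos : 0 < ηs) :
    (∀ (ut : Fin l → ℝ) (v : Fin m → ℝ) (t : ℝ),
      0 ≤ ut → 0 ≤ v → _root_.col X o ⬝ᵥ ut = t → _root_.col Y o ⬝ᵥ v = 1 →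
      (del Y o)ᵀ.mulVec v ≤ (del X o)ᵀ.mulVec ut → ηs ≤ t) ∧
    (∀ ts, IsLeast {t : ℝ | ∃ (ut : Fin l → ℝ) (v : Fin m → ℝ), 0 ≤ ut ∧ 0 ≤ v ∧
      _root_.col X o ⬝ᵥ ut = t ∧ _root_.col Y o ⬝ᵥ v = 1 ∧
      (del Y o)ᵀ.mulVec v ≤ (del X o)ᵀ.mulVec ut} ts → ts = ηs) := by
  classical
  have weak : ∀ (ut : Fin l → ℝ) (v : Fin m → ℝ) (t : ℝ),
      0 ≤ ut → 0 ≤ v → _root_.col X o ⬝ᵥ ut = t → _root_.col Y o ⬝ᵥ v = 1 →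
      (del Y o)ᵀ.mulVec v ≤ (del X o)ᵀ.mulVec ut → ηs ≤ t := by
    intro ut v t hut hv hxt hy1 hd
    have := chain_ineq hS.1 hut hv hd
    rw [hy1, mul_one, hxt] at this
    exact this
  refine ⟨weak, ?_⟩
  rintro ts ⟨hmem, hlb⟩
  obtain ⟨ut0, v0, hut0, hv0, hxt0, hy10, hd0⟩ := hmem
  have h1 : ηs ≤ ts := weak ut0 v0 ts hut0 hv0 hxt0 hy10 hd0
  by_contra hne
  have hlt : ηs < ts := lt_of_le_of_ne h1 (Ne.symm hne)
  set η' : ℝ := (ηs + ts) / 2 with hη'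
  have hη1 : ηs < η' := by rw [hη']; linarith
  have hη2 : η' < ts := by rw [hη']; linarith
  set P := {i : Fin n // i ≠ o}
  set g : (P ⊕ (Fin l ⊕ Fin m)) → EuclideanSpace ℝ (Fin l ⊕ Fin m) := Sum.elim
    (fun p => (WithLp.equiv 2 _).symm (Sum.elim (fun a => X a p.1) (fun b0 => -(Y b0 p.1))))
    (fun k => EuclideanSpace.single k 1) with hg
  set b : EuclideanSpace ℝ (Fin l ⊕ Fin m) :=
    (WithLp.equiv 2 _).symm (Sum.elim (_root_.col X o) (fun b0 => -(η' * Y b0 o))) with hb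
  have coord : ∀ (c : (P ⊕ (Fin l ⊕ Fin m)) → ℝ) (j : Fin l ⊕ Fin m),
      (∑ i, c i • g i) j = ∑ i, c i * g i j :=
    fun c j => by simp [WithLp.ofLp_sum]
  -- b is not in the cone
  have hbnotin : b ∉ coneSet g := by
    rintro ⟨c, hc0, hcsum⟩
    have hfeas : η' ∈ Sset X Y o := by
      refine ⟨fun p => c (Sum.inl p), fun p => hc0 _, fun j => ?_, fun b0 => ?_⟩
      · have hc1 : (∑ i, c i • g i) (Sum.inl j) = b (Sum.inl j) := by rw [hcsum]
        rw [coord] at hc1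
        rw [Fintype.sum_sum_type] at hc1
        simp only [hg, hb, Sum.elim_inl, Sum.elim_inr, WithLp.equiv_symm_apply, PiLp.toLp_apply,
          EuclideanSpace.single_apply, mul_ite, mul_one, mul_zero,
          Finset.sum_ite_eq, Finset.mem_univ, if_true] at hc1
        have : (del X o).mulVec (fun p => c (Sum.inl p)) j
            = ∑ p : P, c (Sum.inl p) * X j p.1 := by
          simp only [Matrix.mulVec, dotProduct, del, Matrix.of_apply]
          exact Finset.sum_congr rfl fun _ _ => mul_comm _ _
        rw [this]
        linarith [hc0 (Sum.inr (Sum.inl j))]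
      · have hc1 : (∑ i, c i • g i) (Sum.inr b0) = b (Sum.inr b0) := by rw [hcsum]
        rw [coord] at hc1
        rw [Fintype.sum_sum_type] at hc1
        simp only [hg, hb, Sum.elim_inl, Sum.elim_inr, WithLp.equiv_symm_apply, PiLp.toLp_apply,
          EuclideanSpace.single_apply, mul_ite, mul_one, mul_zero, mul_neg, neg_mul,
          Finset.sum_neg_distrib, Finset.sum_ite_eq, Finset.mem_univ, if_true] at hc1
        have hmv : (del Y o).mulVec (fun p => c (Sum.inl p)) b0
            = ∑ p : P, c (Sum.inl p) * Y b0 p.1 := by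
          simp only [Matrix.mulVec, dotProduct, del, Matrix.of_apply]
          exact Finset.sum_congr rfl fun _ _ => mul_comm _ _
        have hsm : (η' • _root_.col Y o) b0 = η' * Y b0 o := rfl
        rw [hmv, hsm]
        linarith [hc0 (Sum.inr (Sum.inr b0))]
    exact absurd (hS.2 hfeas) (not_le.mpr hη1)
  obtain ⟨y, hy1, hy2⟩ := farkas g b hbnotin
  set u : Fin l → ℝ := fun j => y (Sum.inl j) with hu
  set w : Fin m → ℝ := fun b0 => y (Sum.inr b0) with hw
  have hu0 : 0 ≤ u := by
    intro j
    simpa [hg, EuclideanSpace.inner_single_left] using hy1 (Sum.inr (Sum.inl j))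
  have hw0 : 0 ≤ w := by
    intro b0
    simpa [hg, EuclideanSpace.inner_single_left] using hy1 (Sum.inr (Sum.inr b0))
  have hduw : (del Y o)ᵀ.mulVec w ≤ (del X o)ᵀ.mulVec u := by
    intro p
    have h := hy1 (Sum.inl p)
    simp only [hg, Sum.elim_inl, PiLp.inner_apply, RCLike.inner_apply, conj_trivial,
      WithLp.equiv_symm_apply, PiLp.toLp_apply, Fintype.sum_sum_type, Sum.elim_inr, neg_mul,
      Finset.sum_neg_distrib] at h
    have e1 : (del X o)ᵀ.mulVec u p = ∑ a, X a p.1 * y (Sum.inl a) := by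
      show ∑ a, (del X o)ᵀ p a * u a = _
      exact Finset.sum_congr rfl fun a _ => by rw [hu]; rfl
    have e2 : (del Y o)ᵀ.mulVec w p = ∑ b0, Y b0 p.1 * y (Sum.inr b0) := by
      show ∑ b0, (del Y o)ᵀ p b0 * w b0 = _
      exact Finset.sum_congr rfl fun b0 _ => by rw [hw]; rfl
    rw [e1, e2]
    simp only [mul_neg, neg_mul, Finset.sum_neg_distrib, mul_comm (y.ofLp _)] at h
    linarith [h]
  have hxuw : _root_.col X o ⬝ᵥ u < η' * (_root_.col Y o ⬝ᵥ w) := by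
    have h := hy2
    simp only [hb, PiLp.inner_apply, RCLike.inner_apply, conj_trivial,
      WithLp.equiv_symm_apply, PiLp.toLp_apply, Fintype.sum_sum_type, Sum.elim_inl, Sum.elim_inr,
      mul_neg, Finset.sum_neg_distrib] at h
    have e1 : _root_.col X o ⬝ᵥ u = ∑ a, y (Sum.inl a) * _root_.col X o a := by
      show ∑ a, _root_.col X o a * u a = _
      exact Finset.sum_congr rfl fun a _ => by rw [hu]; exact mul_comm _ _
    have e2 : η' * (_root_.col Y o ⬝ᵥ w) = ∑ b0, y (Sum.inr b0) * (η' * Y b0 o) := by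
      show η' * ∑ b0, _root_.col Y o b0 * w b0 = _
      rw [Finset.mul_sum]
      exact Finset.sum_congr rfl fun b0 _ => by rw [hw]; show η' * (Y b0 o * _) = _; ring
    rw [e1, e2]
    simp only [neg_mul, mul_neg, Finset.sum_neg_distrib, mul_comm _ (y.ofLp _)] at h
    linarith [h]
  set σ : ℝ := _root_.col Y o ⬝ᵥ w with hσ
  have hchain : ηs * σ ≤ _root_.col X o ⬝ᵥ u := chain_ineq hS.1 hu0 hw0 hduw
  have hσpos : 0 < σ := by nlinarith
  have hmem' : σ⁻¹ * (_root_.col X o ⬝ᵥ u) ∈ {t : ℝ | ∃ (ut : Fin l → ℝ) (v : Fin m → ℝ),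
      0 ≤ ut ∧ 0 ≤ v ∧ _root_.col X o ⬝ᵥ ut = t ∧ _root_.col Y o ⬝ᵥ v = 1 ∧
      (del Y o)ᵀ.mulVec v ≤ (del X o)ᵀ.mulVec ut} := by
    refine ⟨σ⁻¹ • u, σ⁻¹ • w, ?_, ?_, ?_, ?_, ?_⟩
    · exact fun j => mul_nonneg (inv_nonneg.mpr hσpos.le) (hu0 j)
    · exact fun b0 => mul_nonneg (inv_nonneg.mpr hσpos.le) (hw0 b0)
    · rw [dotProduct_smul]; rfl
    · rw [dotProduct_smul, ← hσ, smul_eq_mul, inv_mul_cancel₀ hσpos.ne']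
    · rw [Matrix.mulVec_smul, Matrix.mulVec_smul]
      exact fun p => mul_le_mul_of_nonneg_left (hduw p) (inv_nonneg.mpr hσpos.le)
  have hts' : ts ≤ σ⁻¹ * (_root_.col X o ⬝ᵥ u) := hlb hmem'
  have : σ⁻¹ * (_root_.col X o ⬝ᵥ u) < σ⁻¹ * (η' * σ) := by
    exact mul_lt_mul_of_pos_left hxuw (inv_pos.mpr hσpos)
  rw [mul_comm η' σ, ← mul_assoc, inv_mul_cancel₀ hσpos.ne', one_mul] at this
  linarith
end
end
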